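/- arXiv:2302.00452 — 7 statements merged into one kernel-verified Lean document; each statement's English description precedes it below -/
import Mathlib

section
/- Let T ≥ 1, let φ : ℝ → ℝ be convex on [0,∞) with φ(1) = 0, let δ > 0, and let l ∈ ℝ^T be a loss vector. Suppose q⋆ ∈ Q_{φ,δ} attains the maximum in ρ_{φ,δ}(l) = sup_{q ∈ Q_{φ,δ}} ∑_t q_t l_t. Then for all indices i ≠ j with l_i > l_j, it holds that q⋆_i ≥ q⋆_j. -/
/-- The feasible perturbation set `Q_{φ,δ}` of probability vectors on `Fin T`
whose f-divergence from the uniform vector is at most `δ`. -/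
def QSet (T : ℕ) (φ : ℝ → ℝ) (δ : ℝ) : Set (Fin T → ℝ) :=
  {q | (∀ t, 0 ≤ q t) ∧ (∑ t, q t = 1) ∧
    (1 / (T : ℝ)) * ∑ t, φ ((T : ℝ) * q t) ≤ δ}

theorem stmt_0 (T : ℕ) (hT : 1 ≤ T) (φ : ℝ → ℝ)
    (hφconv : ConvexOn ℝ (Set.Ici (0 : ℝ)) φ) (hφ1 : φ 1 = 0)
    (δ : ℝ) (hδ : 0 < δ) (l : Fin T → ℝ)
    (qs : Fin T → ℝ) (hqs : qs ∈ QSet T φ δ)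
    (hopt : ∀ q ∈ QSet T φ δ, ∑ t, q t * l t ≤ ∑ t, qs t * l t) :
    ∀ i j : Fin T, i ≠ j → l j < l i → qs j ≤ qs i := by
  intro i j hij hlt
  set σ := Equiv.swap i j with hσ
  obtain ⟨hpos, hsum, hdiv⟩ := hqs
  -- the swapped vector is feasible
  have hfeas : (fun t => qs (σ t)) ∈ QSet T φ δ := by
    refine ⟨fun t => hpos _, ?_, ?_⟩
    · simpa using (Equiv.sum_comp σ qs).trans hsum
    · have : ∑ t, φ ((T : ℝ) * qs (σ t)) = ∑ t, φ ((T : ℝ) * qs t) :=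
        Equiv.sum_comp σ (fun t => φ ((T : ℝ) * qs t))
      simpa [this] using hdiv
  have hle := hopt _ hfeas
  -- reindex the left-hand side
  have hre : ∑ t, qs (σ t) * l t = ∑ t, qs t * l (σ t) := by
    have := Equiv.sum_comp σ (fun t => qs (σ t) * l t)
    simpa [hσ, Equiv.swap_apply_self] using this.symm
  rw [hre] at hle
  -- the difference of objectives
  have key : ∑ t, qs t * l t - ∑ t, qs t * l (σ t)
      = (qs i - qs j) * (l i - l j) := by
    rw [← Finset.sum_sub_distrib]
    have hzero : ∀ t ∈ Finset.univ, t ∉ ({i, j} : Finset (Fin T)) →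
        qs t * l t - qs t * l (σ t) = 0 := by
      intro t _ ht
      simp only [Finset.mem_insert, Finset.mem_singleton, not_or] at ht
      rw [hσ, Equiv.swap_apply_of_ne_of_ne ht.1 ht.2]
      ring
    rw [← Finset.sum_subset (Finset.subset_univ {i, j}) hzero,
      Finset.sum_pair hij]
    simp [hσ, Equiv.swap_apply_left, Equiv.swap_apply_right]
    ring
  have h0 : 0 ≤ (qs i - qs j) * (l i - l j) := by linarith
  nlinarith [sub_pos.mpr hlt]
end

section
/- Consider the multi-path setting with scenarios s = 1,…,S having probabilities p_s > 0, ∑_s p_s = 1, times t = 1,…,T, asset losses l^i_{st} = −r^i_{st} for assets i = 1,…,I, portfolio losses l_{st}(x) = ∑_i x_i l^i_{st}, and feasible perturbation set Q_{φ,δ} = {(q_{st}) : q_{st} ≥ 0, ∑_s ∑_t p_s q_{st} = 1, ∑_s p_s (1/T) ∑_t φ(T q_{st}) ≤ δ} for φ : ℝ → ℝ convex and continuous on [0,∞) with φ(1) = 0 and δ > 0, and the risk ρ_{φ,δ}(l(x)) = max_{q ∈ Q_{φ,δ}} ∑_s ∑_t p_s q_{st} l_{st}(x). Let x⋆ minimize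 ρ_{φ,δ}(l(x)) over {x ∈ ℝ^I : (1/T) ∑_s p_s ∑_t r_{st}(x) ≥ r̄}, and assume the Slater condition: there exists x̂ with (1/T) ∑_s p_s ∑_t r_{st}(x̂) > r̄. Then there exist λ⋆ ≥ 0 and q⋆ ∈ Q_{φ,δ} attaining ρ_{φ,δ}(l(x⋆)) such that λ⋆ · ((1/T) ∑_s p_s ∑_t r_{st}(x⋆) − r̄) = 0 and, for every asset i, ∑_s ∑_t p_s q⋆_{st} l^i_{st} = λ⋆ · (1/T) ∑_s p_s ∑_t r^i_{st}. Consequently, if ρ_{φ,δ}(l(x⋆)) ≠ 0 and the market expected return E[r^M] := (1/T) ∑_s p_s ∑_t r_{st}(x⋆) ≠ 0, then for every asset i, (1/T) ∑_s p_s ∑_t r^i_{st} = β^i · E[r^M], where β^i = (∑_s ∑_t p_s q⋆_{st} l^i_{st}) / ρ_{φ,δ}(l(x⋆)). -/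
/-- Multi-path feasible perturbation set `Q_{φ,δ}`:
`q_{st} ≥ 0`, `∑_s ∑_t p_s q_{st} = 1`, and `∑_s p_s (1/T) ∑_t φ(T q_{st}) ≤ δ`. -/
def QSetMP (S T : ℕ) (p : Fin S → ℝ) (φ : ℝ → ℝ) (δ : ℝ) :
    Set (Fin S → Fin T → ℝ) :=
  {q | (∀ s t, 0 ≤ q s t) ∧ (∑ s, ∑ t, p s * q s t = 1) ∧
    (∑ s, p s * ((1 / (T : ℝ)) * ∑ t, φ ((T : ℝ) * q s t)) ≤ δ)}

/-- Multi-path f-divergence induced risk of the portfolio-loss vector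
`l_{st}(x) = ∑_i x_i l^i_{st}` with `l^i_{st} = -r^i_{st}`:
`ρ_{φ,δ}(l(x)) = max_{q ∈ Q_{φ,δ}} ∑_s ∑_t p_s q_{st} l_{st}(x)`. -/
noncomputable def fRiskMP (S T I : ℕ) (p : Fin S → ℝ)
    (r : Fin I → Fin S → Fin T → ℝ) (φ : ℝ → ℝ) (δ : ℝ)
    (x : Fin I → ℝ) : ℝ :=
  sSup ((fun q : Fin S → Fin T → ℝ =>
    ∑ s, ∑ t, p s * q s t * (∑ i, x i * (-(r i s t)))) '' (QSetMP S T p φ δ))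


open Set Filter Topology

lemma absKKT {V : Type*} [NormedAddCommGroup V] [NormedSpace ℝ V]
    {I : ℕ} (Q : Set V) (hne : Q.Nonempty) (hcomp : IsCompact Q) (hconv : Convex ℝ Q)
    (A : V →L[ℝ] (Fin I → ℝ)) (c : Fin I → ℝ) (xs : Fin I → ℝ) (rbar : ℝ)
    (hfeas : rbar ≤ ∑ i, xs i * c i)
    (hopt : ∀ x : Fin I → ℝ, rbar ≤ ∑ i, x i * c i →
      sSup ((fun q => ∑ i, xs i * A q i) '' Q) ≤ sSup ((fun q => ∑ i, x i * A q i) '' Q)) :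
    ∃ lam : ℝ, 0 ≤ lam ∧ ∃ q ∈ Q,
      (∑ i, xs i * A q i = sSup ((fun q => ∑ i, xs i * A q i) '' Q)) ∧
      lam * ((∑ i, xs i * c i) - rbar) = 0 ∧
      (∀ i, A q i = lam * c i) := by
  classical
  set F : (Fin I → ℝ) → V → ℝ := fun x q => ∑ i, x i * A q i with hF
  have hFcont : ∀ x, Continuous (F x) :=
    fun x => continuous_finset_sum _ fun i _ =>
      continuous_const.mul ((continuous_apply i).comp A.continuous)
  have hmax : ∀ x : Fin I → ℝ, ∃ q ∈ Q, IsMaxOn (F x) Q q :=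
    fun x => hcomp.exists_isMaxOn hne (hFcont x).continuousOn
  have hsup : ∀ (x : Fin I → ℝ) (q : V), q ∈ Q → IsMaxOn (F x) Q q →
      sSup (F x '' Q) = F x q := by
    intro x q hq hmax
    exact IsGreatest.csSup_eq ⟨Set.mem_image_of_mem _ hq, by
      rintro y ⟨q', hq', rfl⟩; exact hmax hq'⟩
  obtain ⟨q0, hq0Q, hq0max⟩ := hmax xs
  set ρs : ℝ := F xs q0 with hρs
  set E : ℝ := ∑ i, xs i * c i with hE
  -- expansion identity
  have h1 : ∀ (e : ℝ) (d : Fin I → ℝ) (y : Fin I → ℝ),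
      (∑ i, (xs i + e * d i) * y i) = (∑ i, xs i * y i) + e * ∑ i, y i * d i := by
    intro e d y
    rw [Finset.mul_sum, ← Finset.sum_add_distrib]
    exact Finset.sum_congr rfl fun i _ => by ring
  -- the key claim
  have key : ∀ c' : Fin I → ℝ,
      (∀ d : Fin I → ℝ, 0 ≤ ∑ i, c' i * d i →
        ∃ N : ℕ, ∀ n : ℕ, N ≤ n → rbar ≤ ∑ i, (xs i + (1/(n+1:ℝ)) * d i) * c i) →
      ∃ q ∈ Q, F xs q = ρs ∧ (A q ∈ (Submodule.span ℝ {c'} : Submodule ℝ (Fin I → ℝ)))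
        ∧ 0 ≤ ∑ i, A q i * c' i := by
    intro c' hdir

    classical
    set M : Set V := {q ∈ Q | F xs q = ρs} with hM
    have hMne : M.Nonempty := ⟨q0, hq0Q, hρs.symm⟩
    have hMclosed : IsClosed M :=
      hcomp.isClosed.inter (isClosed_eq (hFcont xs) continuous_const)
    have hMcomp : IsCompact M := hcomp.of_isClosed_subset hMclosed fun q hq => hq.1
    have hMconv : Convex ℝ M := by
      intro q1 hq1 q2 hq2 a b ha hb hab
      refine ⟨hconv hq1.1 hq2.1 ha hb hab, ?_⟩
      have e1 : F xs (a • q1 + b • q2) = a * F xs q1 + b * F xs q2 := by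
        simp only [hF, map_add, map_smul, Pi.add_apply, Pi.smul_apply, smul_eq_mul,
          Finset.mul_sum, ← Finset.sum_add_distrib]
        exact Finset.sum_congr rfl fun i _ => by ring
      rw [e1, hq1.2, hq2.2]; linear_combination ρs * hab
    set K : Set (Fin I → ℝ) := A '' M with hK
    have hKcomp : IsCompact K := hMcomp.image A.continuous
    have hKconv : Convex ℝ K := by
      have := hMconv.linear_image (A : V →ₗ[ℝ] (Fin I → ℝ))
      simpa using this
    set R : Set (Fin I → ℝ) :=
      (Submodule.span ℝ {c'} : Submodule ℝ (Fin I → ℝ)) ∩ {y | 0 ≤ ∑ i, y i * c' i} with hR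
    have hRclosed : IsClosed R :=
      (Submodule.closed_of_finiteDimensional _).inter
        (isClosed_le continuous_const
          (continuous_finset_sum _ fun i _ => (continuous_apply i).mul continuous_const))
    have hRconv : Convex ℝ R := by
      refine ((Submodule.span ℝ {c'}).convex).inter (convex_halfSpace_ge ?_ 0)
      constructor
      · intro a b; simp [add_mul, Finset.sum_add_distrib]
      · intro a b; simp [Finset.mul_sum]; exact Finset.sum_congr rfl fun i _ => by ring
    -- main step : K and R are not disjoint
    have hnotdisj : ¬ Disjoint K R := by
      intro hdisj
      obtain ⟨f, u, v, hfK, huv, hfR⟩ :=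
        geometric_hahn_banach_compact_closed hKconv hKcomp hRconv hRclosed hdisj
      have h0R : (0 : Fin I → ℝ) ∈ R := ⟨Submodule.zero_mem _, by simp⟩
      have hv0 : v < 0 := by have := hfR 0 h0R; simpa using this
      have hcR : ∀ lam : ℝ, 0 ≤ lam → lam • c' ∈ R := by
        intro lam hlam
        refine ⟨Submodule.smul_mem _ _ (Submodule.mem_span_singleton_self c'), ?_⟩
        simp only [Set.mem_setOf_eq, Pi.smul_apply, smul_eq_mul]
        have : ∑ i, lam * c' i * c' i = lam * ∑ i, c' i * c' i := by
          rw [Finset.mul_sum]; exact Finset.sum_congr rfl fun i _ => by ring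
        rw [this]
        exact mul_nonneg hlam (Finset.sum_nonneg fun i _ => mul_self_nonneg _)
      have hfc' : 0 ≤ f c' := by
        by_contra hneg
        push_neg at hneg
        have hlam : (0:ℝ) ≤ v / f c' := by
          have := div_nonneg (neg_nonneg.2 hv0.le) (neg_nonneg.2 hneg.le)
          rwa [neg_div_neg_eq] at this
        have := hfR _ (hcR _ hlam)
        rw [map_smul, smul_eq_mul, div_mul_cancel₀ _ (ne_of_lt hneg)] at this
        exact lt_irrefl v this
      set d : Fin I → ℝ := fun i => f (fun j => if i = j then 1 else 0) with hd
      have hfd : ∀ y : Fin I → ℝ, f y = ∑ i, y i * d i := by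
        intro y
        conv_lhs => rw [pi_eq_sum_univ y]
        rw [map_sum]
        exact Finset.sum_congr rfl fun i _ => by rw [map_smul, smul_eq_mul]
      have hc'd : 0 ≤ ∑ i, c' i * d i := by rw [← hfd]; exact hfc'
      obtain ⟨N, hN⟩ := hdir d hc'd
      -- sequence of perturbed maximizers
      set ε : ℕ → ℝ := fun n => 1 / ((n : ℝ) + N + 1) with hε
      have hεpos : ∀ n, 0 < ε n := fun n => by positivity
      set xn : ℕ → (Fin I → ℝ) := fun n => fun i => xs i + ε n * d i with hxn
      have hxnfeas : ∀ n, rbar ≤ ∑ i, xn n i * c i := by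
        intro n
        have h := hN (n + N) (by omega)
        have : ((n + N : ℕ) : ℝ) + 1 = (n : ℝ) + N + 1 := by push_cast; ring
        rw [this] at h
        exact h
      choose qn hqnQ hqnmax using fun n => hmax (xn n)
      have hρsup : sSup (F xs '' Q) = ρs := by rw [hsup xs q0 hq0Q hq0max, hρs]
      have hlow : ∀ n, ρs ≤ F (xn n) (qn n) := by
        intro n
        have := hopt (xn n) (hxnfeas n)
        rw [hρsup, hsup (xn n) (qn n) (hqnQ n) (hqnmax n)] at this
        exact this
      have hup : ∀ n, F xs (qn n) ≤ ρs := by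
        intro n; rw [hρs]; exact hq0max (hqnQ n)
      have hFexp : ∀ n (q : V), F (xn n) q = F xs q + ε n * f (A q) := by
        intro n q
        rw [hfd]
        simp only [hF, hxn]
        exact h1 (ε n) d (A q)
      have hfAnn : ∀ n, 0 ≤ f (A (qn n)) := by
        intro n
        have h := hlow n
        rw [hFexp] at h
        have h2 := hup n
        nlinarith [hεpos n]
      -- bound on f ∘ A over Q
      obtain ⟨qB, hqBQ, hqBmax⟩ :=
        hcomp.exists_isMaxOn hne ((f.continuous.comp A.continuous).continuousOn)
      set B : ℝ := f (A qB) with hB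
      have hl2 : ∀ n, ρs - ε n * B ≤ F xs (qn n) := by
        intro n
        have h := hlow n
        rw [hFexp] at h
        have hb : f (A (qn n)) ≤ B := hqBmax (hqnQ n)
        nlinarith [hεpos n]
      -- convergent subsequence
      obtain ⟨qbar, hqbarQ, ψ, hψmono, hψtend⟩ := hcomp.tendsto_subseq hqnQ
      have hεtend : Filter.Tendsto ε Filter.atTop (nhds 0) := by
        rw [hε]
        simp only [one_div]
        apply Filter.Tendsto.inv_tendsto_atTop
        apply Filter.tendsto_atTop_add_const_right
        apply Filter.tendsto_atTop_add_const_right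
        exact tendsto_natCast_atTop_atTop
      have hεψtend : Filter.Tendsto (fun k => ε (ψ k)) Filter.atTop (nhds 0) :=
        hεtend.comp hψmono.tendsto_atTop
      have hFtend : Filter.Tendsto (fun k => F xs (qn (ψ k))) Filter.atTop (nhds (F xs qbar)) :=
        ((hFcont xs).tendsto qbar).comp hψtend
      have hub : F xs qbar ≤ ρs :=
        le_of_tendsto hFtend (Filter.Eventually.of_forall fun k => hup (ψ k))
      have hlb : ρs ≤ F xs qbar := by
        have htend2 : Filter.Tendsto (fun k => ρs - ε (ψ k) * B) Filter.atTop (nhds ρs) := by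
          have : Filter.Tendsto (fun k => ε (ψ k) * B) Filter.atTop (nhds 0) := by
            simpa using hεψtend.mul_const B
          simpa using (tendsto_const_nhds.sub this)
        exact le_of_tendsto_of_tendsto' htend2 hFtend fun k => hl2 (ψ k)
      have hqbarM : qbar ∈ M := ⟨hqbarQ, le_antisymm hub hlb⟩
      have hfAtend : Filter.Tendsto (fun k => f (A (qn (ψ k)))) Filter.atTop
          (nhds (f (A qbar))) :=
        ((f.continuous.comp A.continuous).tendsto qbar).comp hψtend
      have hfAqbar : 0 ≤ f (A qbar) :=
        ge_of_tendsto hfAtend (Filter.Eventually.of_forall fun k => hfAnn (ψ k))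
      have : f (A qbar) < u := hfK (A qbar) ⟨qbar, hqbarM, rfl⟩
      linarith
    obtain ⟨y, hyK, hyR⟩ := Set.not_disjoint_iff.mp hnotdisj
    obtain ⟨q, hqM, rfl⟩ := hyK
    exact ⟨q, hqM.1, hqM.2, hyR.1, hyR.2⟩

  have hρsup : sSup (F xs '' Q) = ρs := by rw [hsup xs q0 hq0Q hq0max, hρs]
  rcases eq_or_lt_of_le hfeas with hEeq | hElt
  · -- active constraint: use c' = c
    obtain ⟨q, hqQ, hqval, hspan, hpos⟩ := key c (by
      intro d hd
      refine ⟨0, fun n _ => ?_⟩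
      rw [h1]
      have hpos1 : (0:ℝ) < 1/((n:ℝ)+1) := by positivity
      have h2 : 0 ≤ (1/((n:ℝ)+1)) * ∑ i, c i * d i := by positivity
      rw [hEeq]
      linarith)
    obtain ⟨a, ha⟩ := Submodule.mem_span_singleton.mp hspan
    by_cases hc : c = 0
    · refine ⟨0, le_refl 0, q, hqQ, by show F xs q = sSup (F xs '' Q); rw [hρsup, hqval], by ring, ?_⟩
      intro i
      have : A q = 0 := by rw [← ha, hc, smul_zero]
      rw [congrFun this i]; simp
    · have hex : ∃ i, c i ≠ 0 := by
        by_contra h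
        push_neg at h
        exact hc (funext h)
      obtain ⟨i0, hi0⟩ := hex
      have hs : 0 < ∑ i, c i * c i := by
        refine Finset.sum_pos' (fun i _ => mul_self_nonneg _) ⟨i0, Finset.mem_univ i0, ?_⟩
        exact mul_self_pos.mpr hi0
      have hsum : ∑ i, A q i * c i = a * ∑ i, c i * c i := by
        rw [Finset.mul_sum]
        refine Finset.sum_congr rfl fun i _ => ?_
        rw [← ha, Pi.smul_apply, smul_eq_mul]; ring
      have hanonneg : 0 ≤ a := by
        rw [hsum] at hpos
        by_contra hneg
        push_neg at hneg
        nlinarith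
      refine ⟨a, hanonneg, q, hqQ,
        by show F xs q = sSup (F xs '' Q); rw [hρsup, hqval], by rw [← hEeq]; ring, ?_⟩
      intro i
      rw [← ha, Pi.smul_apply, smul_eq_mul]
  · -- inactive constraint: use c' = 0
    obtain ⟨q, hqQ, hqval, hspan, _⟩ := key 0 (by
      intro d _
      set D : ℝ := ∑ i, c i * d i with hD
      obtain ⟨N, hN⟩ := exists_nat_gt (|D| / (E - rbar))
      refine ⟨N, fun n hn => ?_⟩
      rw [h1, ← hD, ← hE]
      have hn1 : (0:ℝ) < (n:ℝ)+1 := by positivity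
      have hNn : |D| / (E - rbar) < (n:ℝ)+1 := by
        refine lt_of_lt_of_le hN ?_
        have : (N:ℝ) ≤ (n:ℝ) := Nat.cast_le.mpr hn
        linarith
      have h2 : |D| < ((n:ℝ)+1) * (E - rbar) := by
        rwa [div_lt_iff₀ (by linarith)] at hNn
      have h3 : -(((n:ℝ)+1) * (E - rbar)) < D := by nlinarith [neg_abs_le D]
      have hmul : (1/((n:ℝ)+1)) * ((n:ℝ)+1) = 1 := by field_simp
      nlinarith [mul_lt_mul_of_pos_left h3 (show (0:ℝ) < 1/((n:ℝ)+1) by positivity)])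
    have hA0 : A q = 0 := by
      simpa [Submodule.span_zero_singleton] using hspan
    refine ⟨0, le_refl 0, q, hqQ, by show F xs q = sSup (F xs '' Q); rw [hρsup, hqval], by ring, ?_⟩
    intro i
    rw [congrFun hA0 i]; simp

section Qprops
variable (S T I : ℕ) (p : Fin S → ℝ) (φ : ℝ → ℝ) (δ : ℝ)
  (r : Fin I → Fin S → Fin T → ℝ)

/-- the loss-gradient linear map -/
def Lmap : (Fin S → Fin T → ℝ) →ₗ[ℝ] (Fin I → ℝ) where
  toFun := fun q i => ∑ s, ∑ t, p s * q s t * (-(r i s t))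
  map_add' := by
    intro q q'
    funext i
    simp only [Pi.add_apply]
    rw [← Finset.sum_add_distrib]
    refine Finset.sum_congr rfl fun s _ => ?_
    rw [← Finset.sum_add_distrib]
    refine Finset.sum_congr rfl fun t _ => ?_
    ring
  map_smul' := by
    intro a q
    funext i
    simp only [RingHom.id_apply, Pi.smul_apply, smul_eq_mul, Finset.mul_sum]
    refine Finset.sum_congr rfl fun s _ => Finset.sum_congr rfl fun t _ => ?_
    ring

lemma lQne (hT : 1 ≤ T) (hp_sum : ∑ s, p s = 1) (hφ1 : φ 1 = 0) (hδ : 0 < δ) :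
    (QSetMP S T p φ δ).Nonempty := by
  have hT0 : (T : ℝ) ≠ 0 := by
    have : 0 < T := hT
    exact_mod_cast this.ne'
  refine ⟨fun _ _ => 1 / (T : ℝ), fun s t => by positivity, ?_, ?_⟩
  · have : ∀ s : Fin S, ∑ _t : Fin T, p s * (1 / (T : ℝ)) = p s := by
      intro s
      rw [Finset.sum_const, Finset.card_univ, Fintype.card_fin, nsmul_eq_mul]
      field_simp
    simp only [this, hp_sum]
  · have h1 : (T : ℝ) * (1 / (T : ℝ)) = 1 := by field_simp
    simp only [h1, hφ1, Finset.sum_const, Finset.card_univ, Fintype.card_fin, nsmul_eq_mul,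
      mul_zero, smul_zero]
    simp
    positivity

end Qprops

section Qprops2
variable {S T : ℕ} {p : Fin S → ℝ} {φ : ℝ → ℝ} {δ : ℝ}

lemma lC1closed : IsClosed {q : Fin S → Fin T → ℝ | ∀ s t, 0 ≤ q s t} := by
  have : {q : Fin S → Fin T → ℝ | ∀ s t, 0 ≤ q s t}
      = ⋂ s, ⋂ t, {q : Fin S → Fin T → ℝ | 0 ≤ q s t} := by
    ext q; simp [Set.mem_iInter]
  rw [this]
  exact isClosed_iInter fun s => isClosed_iInter fun t =>
    isClosed_le continuous_const ((continuous_apply t).comp (continuous_apply s))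

lemma lQclosed (hφcont : ContinuousOn φ (Set.Ici (0 : ℝ))) :
    IsClosed (QSetMP S T p φ δ) := by
  classical
  have hGcont : ContinuousOn
      (fun q : Fin S → Fin T → ℝ => ∑ s, p s * ((1 / (T : ℝ)) * ∑ t, φ ((T : ℝ) * q s t)))
      {q : Fin S → Fin T → ℝ | ∀ s t, 0 ≤ q s t} := by
    refine continuousOn_finset_sum _ fun s _ => (continuousOn_const.mul
      (continuousOn_const.mul (continuousOn_finset_sum _ fun t _ => ?_)))
    have hev : Continuous (fun q : Fin S → Fin T → ℝ => q s t) :=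
      (continuous_apply t).comp (continuous_apply s)
    refine hφcont.comp (Continuous.continuousOn ?_) ?_
    · exact continuous_const.mul hev
    · intro q hq
      exact mul_nonneg (Nat.cast_nonneg T) (hq s t)
  have heq : QSetMP S T p φ δ =
      ({q : Fin S → Fin T → ℝ | ∀ s t, 0 ≤ q s t} ∩
        (fun q : Fin S → Fin T → ℝ =>
          ∑ s, p s * ((1 / (T : ℝ)) * ∑ t, φ ((T : ℝ) * q s t))) ⁻¹' (Set.Iic δ)) ∩
      {q : Fin S → Fin T → ℝ | ∑ s, ∑ t, p s * q s t = 1} := by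
    ext q
    simp only [QSetMP, Set.mem_setOf_eq, Set.mem_inter_iff, Set.mem_preimage, Set.mem_Iic]
    tauto
  rw [heq]
  refine IsClosed.inter ?_ ?_
  · exact hGcont.preimage_isClosed_of_isClosed lC1closed isClosed_Iic
  · refine isClosed_eq ?_ continuous_const
    exact continuous_finset_sum _ fun s _ => continuous_finset_sum _ fun t _ =>
      continuous_const.mul ((continuous_apply t).comp (continuous_apply s))

lemma lQcompact (hp_pos : ∀ s, 0 < p s) (hφcont : ContinuousOn φ (Set.Ici (0 : ℝ))) :
    IsCompact (QSetMP S T p φ δ) := by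
  classical
  set B : ℝ := ∑ s, 1 / p s with hB
  have hsub : QSetMP S T p φ δ ⊆
      Set.pi Set.univ (fun _ : Fin S => Set.pi Set.univ (fun _ : Fin T => Set.Icc (0:ℝ) B)) := by
    intro q hq s _ t _
    refine ⟨hq.1 s t, ?_⟩
    have h1 : p s * q s t ≤ ∑ t', p s * q s t' :=
      Finset.single_le_sum (fun t' _ => mul_nonneg (hp_pos s).le (hq.1 s t'))
        (Finset.mem_univ t)
    have h2 : ∑ t', p s * q s t' ≤ ∑ s', ∑ t', p s' * q s' t' :=
      Finset.single_le_sum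
        (fun s' _ => Finset.sum_nonneg fun t' _ => mul_nonneg (hp_pos s').le (hq.1 s' t'))
        (Finset.mem_univ s)
    have h3 : p s * q s t ≤ 1 := by rw [← hq.2.1]; exact le_trans h1 h2
    have h4 : q s t ≤ 1 / p s := by
      rw [le_div_iff₀ (hp_pos s)]
      linarith [mul_comm (p s) (q s t)]
    refine le_trans h4 ?_
    rw [hB]
    exact Finset.single_le_sum (f := fun s' => 1 / p s')
      (fun s' _ => div_nonneg zero_le_one (hp_pos s').le) (Finset.mem_univ s)
  exact IsCompact.of_isClosed_subset
    (isCompact_univ_pi fun _ => isCompact_univ_pi fun _ => isCompact_Icc)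
    (lQclosed hφcont) hsub

lemma lQconvex (hT : 1 ≤ T) (hφconv : ConvexOn ℝ (Set.Ici (0 : ℝ)) φ)
    (hp_pos : ∀ s, 0 < p s) :
    Convex ℝ (QSetMP S T p φ δ) := by
  intro q1 hq1 q2 hq2 a b ha hb hab
  have hmem : ∀ s t, (a • q1 + b • q2) s t = a * q1 s t + b * q2 s t := by
    intro s t; simp [Pi.add_apply, Pi.smul_apply, smul_eq_mul]
  refine ⟨fun s t => by
    rw [hmem]
    exact add_nonneg (mul_nonneg ha (hq1.1 s t)) (mul_nonneg hb (hq2.1 s t)), ?_, ?_⟩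
  · have e : ∑ s, ∑ t, p s * (a • q1 + b • q2) s t
        = a * (∑ s, ∑ t, p s * q1 s t) + b * (∑ s, ∑ t, p s * q2 s t) := by
      rw [Finset.mul_sum, Finset.mul_sum, ← Finset.sum_add_distrib]
      refine Finset.sum_congr rfl fun s _ => ?_
      rw [Finset.mul_sum, Finset.mul_sum, ← Finset.sum_add_distrib]
      refine Finset.sum_congr rfl fun t _ => ?_
      rw [hmem]; ring
    rw [e, hq1.2.1, hq2.2.1]
    linarith
  · have hterm : ∀ s t, φ ((T : ℝ) * (a • q1 + b • q2) s t)
        ≤ a * φ ((T : ℝ) * q1 s t) + b * φ ((T : ℝ) * q2 s t) := by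
      intro s t
      have harg : (T : ℝ) * (a • q1 + b • q2) s t
          = a * ((T : ℝ) * q1 s t) + b * ((T : ℝ) * q2 s t) := by rw [hmem]; ring
      rw [harg]
      have h1 : (T : ℝ) * q1 s t ∈ Set.Ici (0:ℝ) :=
        mul_nonneg (Nat.cast_nonneg T) (hq1.1 s t)
      have h2 : (T : ℝ) * q2 s t ∈ Set.Ici (0:ℝ) :=
        mul_nonneg (Nat.cast_nonneg T) (hq2.1 s t)
      have := hφconv.2 h1 h2 ha hb hab
      simpa [smul_eq_mul] using this
    have hTpos : (0:ℝ) < (T:ℝ) := by exact_mod_cast hT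
    have hstep : ∀ s, p s * ((1 / (T : ℝ)) * ∑ t, φ ((T : ℝ) * (a • q1 + b • q2) s t))
        ≤ a * (p s * ((1 / (T : ℝ)) * ∑ t, φ ((T : ℝ) * q1 s t)))
          + b * (p s * ((1 / (T : ℝ)) * ∑ t, φ ((T : ℝ) * q2 s t))) := by
      intro s
      have hsum : ∑ t, φ ((T : ℝ) * (a • q1 + b • q2) s t)
          ≤ a * (∑ t, φ ((T : ℝ) * q1 s t)) + b * (∑ t, φ ((T : ℝ) * q2 s t)) := by
        rw [Finset.mul_sum, Finset.mul_sum, ← Finset.sum_add_distrib]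
        exact Finset.sum_le_sum fun t _ => hterm s t
      have hc : 0 ≤ p s * (1 / (T : ℝ)) := mul_nonneg (hp_pos s).le (by positivity)
      calc p s * ((1 / (T : ℝ)) * ∑ t, φ ((T : ℝ) * (a • q1 + b • q2) s t))
          = (p s * (1 / (T : ℝ))) * ∑ t, φ ((T : ℝ) * (a • q1 + b • q2) s t) := by ring
        _ ≤ (p s * (1 / (T : ℝ))) * (a * (∑ t, φ ((T : ℝ) * q1 s t))
              + b * (∑ t, φ ((T : ℝ) * q2 s t))) := mul_le_mul_of_nonneg_left hsum hc
        _ = a * (p s * ((1 / (T : ℝ)) * ∑ t, φ ((T : ℝ) * q1 s t)))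
              + b * (p s * ((1 / (T : ℝ)) * ∑ t, φ ((T : ℝ) * q2 s t))) := by ring
    calc ∑ s, p s * ((1 / (T : ℝ)) * ∑ t, φ ((T : ℝ) * (a • q1 + b • q2) s t))
        ≤ ∑ s, (a * (p s * ((1 / (T : ℝ)) * ∑ t, φ ((T : ℝ) * q1 s t)))
            + b * (p s * ((1 / (T : ℝ)) * ∑ t, φ ((T : ℝ) * q2 s t)))) :=
          Finset.sum_le_sum fun s _ => hstep s
      _ = a * ∑ s, (p s * ((1 / (T : ℝ)) * ∑ t, φ ((T : ℝ) * q1 s t)))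
            + b * ∑ s, (p s * ((1 / (T : ℝ)) * ∑ t, φ ((T : ℝ) * q2 s t))) := by
          rw [Finset.sum_add_distrib, ← Finset.mul_sum, ← Finset.mul_sum]
      _ ≤ a * δ + b * δ := by
          have := hq1.2.2; have := hq2.2.2
          have h1 := mul_le_mul_of_nonneg_left hq1.2.2 ha
          have h2 := mul_le_mul_of_nonneg_left hq2.2.2 hb
          linarith
      _ = δ := by rw [← add_mul, hab, one_mul]

end Qprops2

lemma swap3 {S T I : ℕ} (g : Fin S → Fin T → Fin I → ℝ) :
    ∑ s, ∑ t, ∑ i, g s t i = ∑ i, ∑ s, ∑ t, g s t i := by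
  have h1 : ∀ s, ∑ t, ∑ i, g s t i = ∑ i, ∑ t, g s t i := fun s => Finset.sum_comm
  simp only [h1]
  exact Finset.sum_comm



theorem stmt_1 (S T I : ℕ) (hS : 1 ≤ S) (hT : 1 ≤ T) (hI : 1 ≤ I)
    (p : Fin S → ℝ) (hp_pos : ∀ s, 0 < p s) (hp_sum : ∑ s, p s = 1)
    (r : Fin I → Fin S → Fin T → ℝ)
    (φ : ℝ → ℝ) (hφconv : ConvexOn ℝ (Set.Ici (0 : ℝ)) φ)
    (hφcont : ContinuousOn φ (Set.Ici (0 : ℝ))) (hφ1 : φ 1 = 0)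
    (δ : ℝ) (hδ : 0 < δ) (rbar : ℝ)
    (xs : Fin I → ℝ)
    (hxs_feas :
      (1 / (T : ℝ)) * ∑ s, p s * ∑ t, (∑ i, xs i * r i s t) ≥ rbar)
    (hxs_opt : ∀ x : Fin I → ℝ,
      (1 / (T : ℝ)) * ∑ s, p s * ∑ t, (∑ i, x i * r i s t) ≥ rbar →
      fRiskMP S T I p r φ δ xs ≤ fRiskMP S T I p r φ δ x)
    (hslater : ∃ xhat : Fin I → ℝ,
      (1 / (T : ℝ)) * ∑ s, p s * ∑ t, (∑ i, xhat i * r i s t) > rbar) :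
    ∃ lam : ℝ, 0 ≤ lam ∧ ∃ qs ∈ QSetMP S T p φ δ,
      (∑ s, ∑ t, p s * qs s t * (∑ i, xs i * (-(r i s t))) =
        fRiskMP S T I p r φ δ xs) ∧
      lam * ((1 / (T : ℝ)) * ∑ s, p s * ∑ t, (∑ i, xs i * r i s t) - rbar)
        = 0 ∧
      (∀ i, ∑ s, ∑ t, p s * qs s t * (-(r i s t)) =
        lam * ((1 / (T : ℝ)) * ∑ s, p s * ∑ t, r i s t)) ∧
      (fRiskMP S T I p r φ δ xs ≠ 0 →
        (1 / (T : ℝ)) * ∑ s, p s * ∑ t, (∑ i, xs i * r i s t) ≠ 0 →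
        ∀ i, (1 / (T : ℝ)) * ∑ s, p s * ∑ t, r i s t =
          ((∑ s, ∑ t, p s * qs s t * (-(r i s t))) / fRiskMP S T I p r φ δ xs)
            * ((1 / (T : ℝ)) * ∑ s, p s * ∑ t, (∑ i', xs i' * r i' s t))) := by
  classical
  have hQne := lQne S T p φ δ hT hp_sum hφ1 hδ
  have hQcomp : IsCompact (QSetMP S T p φ δ) := lQcompact hp_pos hφcont
  have hQconv : Convex ℝ (QSetMP S T p φ δ) := lQconvex hT hφconv hp_pos
  let A : (Fin S → Fin T → ℝ) →L[ℝ] (Fin I → ℝ) :=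
    LinearMap.toContinuousLinearMap (Lmap S T I p r)
  have hAq : ∀ (q : Fin S → Fin T → ℝ) i,
      A q i = ∑ s, ∑ t, p s * q s t * (-(r i s t)) := fun q i => rfl
  let c : Fin I → ℝ := fun i => (1 / (T : ℝ)) * ∑ s, p s * ∑ t, r i s t
  have hci : ∀ i, c i = (1 / (T : ℝ)) * ∑ s, p s * ∑ t, r i s t := fun i => rfl
  have hg : ∀ x : Fin I → ℝ,
      (1 / (T : ℝ)) * ∑ s, p s * ∑ t, (∑ i, x i * r i s t) = ∑ i, x i * c i := by
    intro x
    simp only [hci, Finset.mul_sum]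
    rw [swap3]
    exact Finset.sum_congr rfl fun i _ => Finset.sum_congr rfl fun s _ =>
      Finset.sum_congr rfl fun t _ => by ring
  have hobj : ∀ (x : Fin I → ℝ) (q : Fin S → Fin T → ℝ),
      (∑ s, ∑ t, p s * q s t * (∑ i, x i * (-(r i s t)))) = ∑ i, x i * A q i := by
    intro x q
    simp only [hAq, Finset.mul_sum]
    rw [swap3]
    exact Finset.sum_congr rfl fun i _ => Finset.sum_congr rfl fun s _ =>
      Finset.sum_congr rfl fun t _ => by ring
  have himg : ∀ x : Fin I → ℝ,
      (fun q : Fin S → Fin T → ℝ =>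
        ∑ s, ∑ t, p s * q s t * (∑ i, x i * (-(r i s t))))
      = (fun q => ∑ i, x i * A q i) := fun x => funext fun q => hobj x q
  have hfR : ∀ x : Fin I → ℝ, fRiskMP S T I p r φ δ x
      = sSup ((fun q => ∑ i, x i * A q i) '' (QSetMP S T p φ δ)) := by
    intro x
    unfold fRiskMP
    rw [himg x]
  obtain ⟨lam, hlam, q, hqQ, hqval, hcompl, hgrad⟩ :=
    absKKT (QSetMP S T p φ δ) hQne hQcomp hQconv A c xs rbar
      (by rw [← hg]; exact hxs_feas)
      (fun x hx => by rw [← hfR, ← hfR]; exact hxs_opt x (by rw [hg]; exact hx))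
  have hval' : ∑ s, ∑ t, p s * q s t * (∑ i, xs i * (-(r i s t)))
      = fRiskMP S T I p r φ δ xs := by
    rw [hobj, hfR]; exact hqval
  have hnum : ∀ i, (∑ s, ∑ t, p s * q s t * (-(r i s t))) = lam * c i := fun i => by
    rw [← hAq]; exact hgrad i
  refine ⟨lam, hlam, q, hqQ, hval', ?_, ?_, ?_⟩
  · rw [hg]; exact hcompl
  · intro i; rw [hnum i, hci]
  · intro hρne hEne i
    have hρval : fRiskMP S T I p r φ δ xs = lam * (∑ i, xs i * c i) := by
      rw [← hval', hobj, Finset.mul_sum]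
      exact Finset.sum_congr rfl fun j _ => by rw [hgrad j]; ring
    rw [hg] at hEne
    have hlamne : lam ≠ 0 := by
      intro h0
      rw [hρval, h0, zero_mul] at hρne
      exact hρne rfl
    rw [hg xs, hnum i, hρval, ← hci i]
    field_simp
end

section
/- Let T ≥ 1, let φ : ℝ → ℝ be convex on [0,∞) with φ(1) = 0, let δ ≥ 0, and let ψ : ℝ → ℝ be any function satisfying the Fenchel–Young inequality ψ(y) ≥ y·z − φ(z) for all y ∈ ℝ and all z ≥ 0. Then for every loss vector l ∈ ℝ^T, every t > 0, every μ ∈ ℝ, and every q ∈ Q_{φ,δ}: ∑_{t'} q_{t'} l_{t'} ≤ t·(δ + μ + (1/T) ∑_{t'} ψ(l_{t'}/t − μ)). In particular, ρ_{φ,δ}(l) ≤ inf over t > 0 and μ ∈ ℝ of t·(δ + μ + (1/T) ∑_{t'} ψ(l_{t'}/t − μ)). -/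
/-- The f-divergence induced risk `ρ_{φ,δ}(l) = sup_{q ∈ Q_{φ,δ}} ∑_t q_t l_t`. -/
noncomputable def fRisk (T : ℕ) (φ : ℝ → ℝ) (δ : ℝ) (l : Fin T → ℝ) : ℝ :=
  sSup ((fun q : Fin T → ℝ => ∑ t, q t * l t) '' (QSet T φ δ))

theorem stmt_3 (T : ℕ) (hT : 1 ≤ T) (φ ψ : ℝ → ℝ)
    (hφconv : ConvexOn ℝ (Set.Ici (0 : ℝ)) φ) (hφ1 : φ 1 = 0)
    (δ : ℝ) (hδ : 0 ≤ δ)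
    (hFY : ∀ y z : ℝ, 0 ≤ z → y * z - φ z ≤ ψ y) :
    ∀ l : Fin T → ℝ, ∀ t : ℝ, 0 < t → ∀ μ : ℝ,
      (∀ q ∈ QSet T φ δ,
        ∑ t', q t' * l t' ≤
          t * (δ + μ + (1 / (T : ℝ)) * ∑ t', ψ (l t' / t - μ))) ∧
      fRisk T φ δ l ≤ t * (δ + μ + (1 / (T : ℝ)) * ∑ t', ψ (l t' / t - μ)) := by
  intro l t ht μ
  have hTpos : (0:ℝ) < (T:ℝ) := by exact_mod_cast Nat.lt_of_lt_of_le Nat.zero_lt_one hT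
  have main : ∀ q ∈ QSet T φ δ,
      ∑ t', q t' * l t' ≤ t * (δ + μ + (1 / (T : ℝ)) * ∑ t', ψ (l t' / t - μ)) := by
    intro q hq
    obtain ⟨hq0, hq1, hqd⟩ := hq
    have key : ∀ t', (T:ℝ) * q t' * (l t' / t - μ)
        ≤ ψ (l t' / t - μ) + φ ((T:ℝ) * q t') := by
      intro t'
      have := hFY (l t' / t - μ) ((T:ℝ) * q t')
        (mul_nonneg hTpos.le (hq0 t'))
      linarith [this]
    have hsum : ∑ t', (T:ℝ) * q t' * (l t' / t - μ)
        ≤ ∑ t', ψ (l t' / t - μ) + ∑ t', φ ((T:ℝ) * q t') := by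
      rw [← Finset.sum_add_distrib]
      exact Finset.sum_le_sum fun t' _ => key t'
    have hlhs : ∑ t', (T:ℝ) * q t' * (l t' / t - μ)
        = (T:ℝ) * ((∑ t', q t' * (l t' / t)) - μ) := by
      have e : ∀ t', (T:ℝ) * q t' * (l t' / t - μ)
          = (T:ℝ) * (q t' * (l t' / t)) - (T:ℝ) * μ * q t' := fun t' => by ring
      rw [Finset.sum_congr rfl (fun t' _ => e t'), Finset.sum_sub_distrib,
        ← Finset.mul_sum, ← Finset.mul_sum, hq1, mul_one, mul_sub]
    have hφsum : (1 / (T:ℝ)) * ∑ t', φ ((T:ℝ) * q t') ≤ δ := hqd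
    have h2 : (∑ t', q t' * (l t' / t)) - μ
        ≤ (1 / (T:ℝ)) * ∑ t', ψ (l t' / t - μ) + δ := by
      have h' := hsum
      rw [hlhs] at h'
      have hinv : (1 / (T:ℝ)) * (T:ℝ) = 1 := by field_simp
      have h5 := mul_le_mul_of_nonneg_left h'
        (le_of_lt (by positivity : (0:ℝ) < 1 / (T:ℝ)))
      rw [← mul_assoc, hinv, one_mul, mul_add] at h5
      linarith
    have h4 : ∑ t', q t' * l t' = t * ∑ t', q t' * (l t' / t) := by
      rw [Finset.mul_sum]
      apply Finset.sum_congr rfl; intro t' _; field_simp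
    rw [h4]
    have := mul_le_mul_of_nonneg_left (by linarith : ∑ t', q t' * (l t' / t)
        ≤ δ + μ + (1 / (T:ℝ)) * ∑ t', ψ (l t' / t - μ)) ht.le
    linarith
  refine ⟨main, ?_⟩
  have hne : ((fun q : Fin T → ℝ => ∑ t', q t' * l t') '' (QSet T φ δ)).Nonempty := by
    refine ⟨_, ⟨fun _ => 1 / (T:ℝ), ?_, rfl⟩⟩
    refine ⟨fun _ => by positivity, ?_, ?_⟩
    · simp [Finset.sum_const, Finset.card_fin]
      field_simp
    · have : ∀ t' : Fin T, φ ((T:ℝ) * (1 / (T:ℝ))) = 0 := by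
        intro t'; rw [mul_one_div, div_self hTpos.ne', hφ1]
      simp only [Finset.sum_const, Finset.card_fin]
      rw [mul_one_div, div_self hTpos.ne', hφ1]
      simp [hδ]
  apply csSup_le hne
  rintro x ⟨q, hq, rfl⟩
  exact main q hq
end

section
/- Let T ≥ 1, let φ : ℝ → ℝ be convex on [0,∞) with φ(1) = 0, let δ > 0, and let ψ : ℝ → ℝ be differentiable and satisfy, for all y ∈ ℝ: ψ'(y) ≥ 0, the Fenchel–Young equality φ(ψ'(y)) + ψ(y) = y·ψ'(y), and the Fenchel–Young inequality ψ(y) ≥ y·z − φ(z) for all z ≥ 0. Let l ∈ ℝ^T and suppose t⋆ > 0 and μ⋆ ∈ ℝ solve the characterizing equations (1/T) ∑_t ψ'(l_t/t⋆ − μ⋆) = 1 and (1/T) ∑_t φ(ψ'(l_t/t⋆ − μ⋆)) = δ. Then the vector q⋆ defined by q⋆_t = ψ'(l_t/t⋆ − μ⋆)/T belongs to Q_{φ,δ}, satisfies ∑_t q⋆_t l_t = t⋆·(δ + μ⋆ + (1/T) ∑_t ψ(l_t/t⋆ − μ⋆)), and is optimal in the dual problem: ρ_{φ,δ}(l) =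 ∑_t q⋆_t l_t. -/
/-!
Weak duality: for every `τ > 0` and `μ`, the Fenchel–Young inequality
`y z - φ z ≤ ψ y`, applied with `y = l_t / τ - μ` and `z = T q_t` and summed over `t`, bounds
`∑_t q_t l_t` on `Q_{φ,δ}` by the dual objective `τ (δ + μ + (1/T) ∑_t ψ (l_t / τ - μ))`.
At `q⋆_t = ψ'(y_t) / T` the Fenchel–Young equality makes every termwise inequality an equality,
and the characterizing equations say that `q⋆` sums to one and exhausts the divergence budget
`δ`, so `q⋆` is feasible and attains the bound.
-/

open Finset

noncomputable def dualObjective (T : ℕ) (ψ : ℝ → ℝ) (δ : ℝ) (l : Fin T → ℝ) (τ μ : ℝ) : ℝ :=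
  τ * (δ + μ + (1 / (T : ℝ)) * ∑ t, ψ (l t / τ - μ))

section FenchelYoung

variable {φ ψ : ℝ → ℝ}

theorem mul_le_of_fenchelYoung_le (hFY : ∀ y z : ℝ, 0 ≤ z → y * z - φ z ≤ ψ y)
    {τ : ℝ} (hτ : 0 < τ) (μ a : ℝ) {w : ℝ} (hw : 0 ≤ w) :
    w * a ≤ τ * (μ * w + φ w + ψ (a / τ - μ)) := by
  calc w * a = τ * ((a / τ - μ) * w + μ * w) := by field_simp; ring
    _ ≤ τ * (μ * w + φ w + ψ (a / τ - μ)) :=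
      mul_le_mul_of_nonneg_left (by linarith [hFY (a / τ - μ) w hw]) hτ.le

theorem mul_eq_of_fenchelYoung_eq {ψ' : ℝ → ℝ} (hFYeq : ∀ y : ℝ, φ (ψ' y) + ψ y = y * ψ' y)
    {τ : ℝ} (hτ : τ ≠ 0) (μ a : ℝ) :
    ψ' (a / τ - μ) * a = τ * (μ * ψ' (a / τ - μ) + φ (ψ' (a / τ - μ)) + ψ (a / τ - μ)) := by
  rw [add_assoc, hFYeq]
  field_simp
  ring

end FenchelYoung

section Duality

variable {T : ℕ} {φ ψ ψ' : ℝ → ℝ} {δ : ℝ} {l : Fin T → ℝ} {τ μ : ℝ}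

theorem sum_mul_le_dualObjective (hFY : ∀ y z : ℝ, 0 ≤ z → y * z - φ z ≤ ψ y) (hτ : 0 < τ)
    {q : Fin T → ℝ} (hq : q ∈ QSet T φ δ) :
    ∑ t, q t * l t ≤ dualObjective T ψ δ l τ μ := by
  obtain ⟨hq0, hq1, hqδ⟩ := hq
  have hT : (0 : ℝ) < T := Nat.cast_pos.2 (Nat.pos_of_ne_zero (by rintro rfl; simp at hq1))
  calc ∑ t, q t * l t = (1 / T) * ∑ t, (T * q t) * l t := by
        rw [mul_sum]; congr! 1 with t; field_simp
    _ ≤ (1 / T) * ∑ t, τ * (μ * (T * q t) + φ (T * q t) + ψ (l t / τ - μ)) :=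
        mul_le_mul_of_nonneg_left (sum_le_sum fun t _ =>
          mul_le_of_fenchelYoung_le hFY hτ μ (l t) (mul_nonneg hT.le (hq0 t))) (by positivity)
    _ = τ * (μ + (1 / T) * ∑ t, φ (T * q t) + (1 / T) * ∑ t, ψ (l t / τ - μ)) := by
        simp only [← mul_sum, sum_add_distrib, hq1]
        field_simp
    _ ≤ dualObjective T ψ δ l τ μ := mul_le_mul_of_nonneg_left (by linarith) hτ.le

theorem sum_mul_eq_dualObjective (hFYeq : ∀ y : ℝ, φ (ψ' y) + ψ y = y * ψ' y) (hτ : τ ≠ 0)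
    (hch1 : (1 / (T : ℝ)) * ∑ t, ψ' (l t / τ - μ) = 1)
    (hch2 : (1 / (T : ℝ)) * ∑ t, φ (ψ' (l t / τ - μ)) = δ) :
    ∑ t, (ψ' (l t / τ - μ) / T) * l t = dualObjective T ψ δ l τ μ := by
  have hT : (T : ℝ) ≠ 0 := by rintro h; simp [h] at hch1
  calc ∑ t, (ψ' (l t / τ - μ) / T) * l t = (1 / T) * ∑ t, ψ' (l t / τ - μ) * l t := by
        rw [mul_sum]; congr! 1 with t; ring
    _ = τ * (μ * ((1 / T) * ∑ t, ψ' (l t / τ - μ))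
          + (1 / T) * ∑ t, φ (ψ' (l t / τ - μ)) + (1 / T) * ∑ t, ψ (l t / τ - μ)) := by
        simp only [mul_eq_of_fenchelYoung_eq hFYeq hτ, ← mul_sum, sum_add_distrib]
        ring
    _ = dualObjective T ψ δ l τ μ := by
        rw [hch1, hch2, dualObjective]
        ring

theorem mem_QSet_of_characterizing (hψ'nonneg : ∀ y : ℝ, 0 ≤ ψ' y)
    (hch1 : (1 / (T : ℝ)) * ∑ t, ψ' (l t / τ - μ) = 1)
    (hch2 : (1 / (T : ℝ)) * ∑ t, φ (ψ' (l t / τ - μ)) = δ) :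
    (fun t => ψ' (l t / τ - μ) / (T : ℝ)) ∈ QSet T φ δ := by
  have hT : (T : ℝ) ≠ 0 := by rintro h; simp [h] at hch1
  refine ⟨fun t => div_nonneg (hψ'nonneg _) (Nat.cast_nonneg T), ?_, ?_⟩
  · rw [← hch1, mul_sum]
    congr! 1 with t
    ring
  · simp only [mul_div_cancel₀ _ hT, hch2, le_refl]

theorem fRisk_eq_dualObjective (hFY : ∀ y z : ℝ, 0 ≤ z → y * z - φ z ≤ ψ y) (hτ : 0 < τ)
    {q : Fin T → ℝ} (hq : q ∈ QSet T φ δ) (hqval : ∑ t, q t * l t = dualObjective T ψ δ l τ μ) :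
    fRisk T φ δ l = dualObjective T ψ δ l τ μ := by
  refine IsGreatest.csSup_eq ⟨⟨q, hq, hqval⟩, ?_⟩
  rintro _ ⟨q', hq', rfl⟩
  exact sum_mul_le_dualObjective hFY hτ hq'

end Duality

theorem stmt_4_general (T : ℕ) (φ ψ ψ' : ℝ → ℝ)
    (δ : ℝ)
    (hψ'nonneg : ∀ y : ℝ, 0 ≤ ψ' y)
    (hFYeq : ∀ y : ℝ, φ (ψ' y) + ψ y = y * ψ' y)
    (hFY : ∀ y z : ℝ, 0 ≤ z → y * z - φ z ≤ ψ y)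
    (l : Fin T → ℝ) (tstar μstar : ℝ) (htstar : 0 < tstar)
    (hch1 : (1 / (T : ℝ)) * ∑ t, ψ' (l t / tstar - μstar) = 1)
    (hch2 : (1 / (T : ℝ)) * ∑ t, φ (ψ' (l t / tstar - μstar)) = δ) :
    (fun t => ψ' (l t / tstar - μstar) / (T : ℝ)) ∈ QSet T φ δ ∧
    (∑ t, (ψ' (l t / tstar - μstar) / (T : ℝ)) * l t =
      tstar * (δ + μstar + (1 / (T : ℝ)) * ∑ t, ψ (l t / tstar - μstar))) ∧
    fRisk T φ δ l = ∑ t, (ψ' (l t / tstar - μstar) / (T : ℝ)) * l t := by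
  have hmem := mem_QSet_of_characterizing hψ'nonneg hch1 hch2
  have hval := sum_mul_eq_dualObjective hFYeq htstar.ne' hch1 hch2
  exact ⟨hmem, hval, hval ▸ fRisk_eq_dualObjective hFY htstar hmem hval⟩

theorem stmt_4 (T : ℕ) (hT : 1 ≤ T) (φ ψ ψ' : ℝ → ℝ)
    (hφconv : ConvexOn ℝ (Set.Ici (0 : ℝ)) φ) (hφ1 : φ 1 = 0)
    (δ : ℝ) (hδ : 0 < δ)
    (hderiv : ∀ y : ℝ, HasDerivAt ψ (ψ' y) y)
    (hψ'nonneg : ∀ y : ℝ, 0 ≤ ψ' y)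
    (hFYeq : ∀ y : ℝ, φ (ψ' y) + ψ y = y * ψ' y)
    (hFY : ∀ y z : ℝ, 0 ≤ z → y * z - φ z ≤ ψ y)
    (l : Fin T → ℝ) (tstar μstar : ℝ) (htstar : 0 < tstar)
    (hch1 : (1 / (T : ℝ)) * ∑ t, ψ' (l t / tstar - μstar) = 1)
    (hch2 : (1 / (T : ℝ)) * ∑ t, φ (ψ' (l t / tstar - μstar)) = δ) :
    (fun t => ψ' (l t / tstar - μstar) / (T : ℝ)) ∈ QSet T φ δ ∧
    (∑ t, (ψ' (l t / tstar - μstar) / (T : ℝ)) * l t =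
      tstar * (δ + μstar + (1 / (T : ℝ)) * ∑ t, ψ (l t / tstar - μstar))) ∧
    fRisk T φ δ l = ∑ t, (ψ' (l t / tstar - μstar) / (T : ℝ)) * l t :=
  stmt_4_general T φ ψ ψ' δ hψ'nonneg hFYeq hFY l tstar μstar htstar hch1 hch2
end

section
/- Let T ≥ 1, let φ : ℝ → ℝ be convex on [0,∞) with φ(1) = 0, and let 0 < δ₁ ≤ δ₂. Then for every loss vector l ∈ ℝ^T with l_t ≥ 0 for all t, it holds that ρ_{φ,δ₂}(l) ≤ (δ₂/δ₁) · ρ_{φ,δ₁}(l). -/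
/-! Shrinking the radius from `δ₂` to `δ₁` costs at most the factor `δ₂ / δ₁`: any `q` in
`Q_{φ,δ₂}` can be pulled towards the uniform vector, `q' = a q + (1 - a) p̄` with `a = δ₁ / δ₂`.
Convexity of `φ` together with `φ 1 = 0` gives `D_φ(q'‖p̄) ≤ a D_φ(q‖p̄) ≤ δ₁`, and for a
nonnegative loss the uniform part only adds, so `⟪q', l⟫ ≥ a ⟪q, l⟫`. -/

open Finset

lemma ConvexOn.map_mix_one_le {φ : ℝ → ℝ} (hφ : ConvexOn ℝ (Set.Ici 0) φ) (hφ1 : φ 1 = 0)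
    {a x : ℝ} (ha₀ : 0 ≤ a) (ha₁ : a ≤ 1) (hx : 0 ≤ x) :
    φ (a * x + (1 - a)) ≤ a * φ x := by
  have h := hφ.2 (Set.mem_Ici.2 hx) (Set.mem_Ici.2 zero_le_one) ha₀ (sub_nonneg.2 ha₁)
    (add_sub_cancel a 1)
  simpa only [smul_eq_mul, mul_one, hφ1, mul_zero, add_zero] using h

lemma QSet.card_ne_zero {T : ℕ} {φ : ℝ → ℝ} {δ : ℝ} {q : Fin T → ℝ} (hq : q ∈ QSet T φ δ) :
    T ≠ 0 := by
  rintro rfl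
  simpa using hq.2.1

lemma QSet.le_one {T : ℕ} {φ : ℝ → ℝ} {δ : ℝ} {q : Fin T → ℝ} (hq : q ∈ QSet T φ δ)
    (t : Fin T) : q t ≤ 1 :=
  hq.2.1 ▸ single_le_sum (fun i _ => hq.1 i) (mem_univ t)

lemma mix_uniform_mem_QSet {T : ℕ} {φ : ℝ → ℝ} {δ a : ℝ} {q : Fin T → ℝ}
    (hφ : ConvexOn ℝ (Set.Ici 0) φ) (hφ1 : φ 1 = 0) (hq : q ∈ QSet T φ δ)
    (ha₀ : 0 ≤ a) (ha₁ : a ≤ 1) :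
    (fun t => a * q t + (1 - a) / T) ∈ QSet T φ (a * δ) := by
  obtain ⟨hq₀, hq₁, hqδ⟩ := hq
  have hT : (T : ℝ) ≠ 0 := Nat.cast_ne_zero.2 (QSet.card_ne_zero ⟨hq₀, hq₁, hqδ⟩)
  have hT₀ : (0 : ℝ) < T := lt_of_le_of_ne (Nat.cast_nonneg T) hT.symm
  refine ⟨fun t => add_nonneg (mul_nonneg ha₀ (hq₀ t)) (div_nonneg (sub_nonneg.2 ha₁) hT₀.le),
    ?_, ?_⟩
  · simp only [sum_add_distrib, ← mul_sum, hq₁, sum_const, card_univ, Fintype.card_fin,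
      nsmul_eq_mul]
    field_simp
    ring
  · have hpoint (t : Fin T) : φ (T * (a * q t + (1 - a) / T)) ≤ a * φ (T * q t) := by
      have harg : (T : ℝ) * (a * q t + (1 - a) / T) = a * (T * q t) + (1 - a) := by
        field_simp
      rw [harg]
      exact hφ.map_mix_one_le hφ1 ha₀ ha₁ (mul_nonneg hT₀.le (hq₀ t))
    calc 1 / (T : ℝ) * ∑ t, φ (T * (a * q t + (1 - a) / T))
        ≤ 1 / T * ∑ t, a * φ (T * q t) := by gcongr with t; exact hpoint t
      _ = a * (1 / T * ∑ t, φ (T * q t)) := by rw [← mul_sum]; ring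
      _ ≤ a * δ := by gcongr

lemma mul_sum_le_sum_mix_uniform {T : ℕ} {a : ℝ} {q l : Fin T → ℝ} (ha₁ : a ≤ 1)
    (hl : ∀ t, 0 ≤ l t) :
    a * ∑ t, q t * l t ≤ ∑ t, (a * q t + (1 - a) / T) * l t := by
  rw [mul_sum]
  refine sum_le_sum fun t _ => ?_
  have : 0 ≤ (1 - a) / T * l t :=
    mul_nonneg (div_nonneg (sub_nonneg.2 ha₁) (Nat.cast_nonneg T)) (hl t)
  linarith

lemma bddAbove_QSet_image (T : ℕ) (φ : ℝ → ℝ) (δ : ℝ) (l : Fin T → ℝ) :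
    BddAbove ((fun q : Fin T → ℝ => ∑ t, q t * l t) '' QSet T φ δ) := by
  refine ⟨∑ t, |l t|, ?_⟩
  rintro _ ⟨q, hq, rfl⟩
  refine sum_le_sum fun t _ => ?_
  calc q t * l t ≤ q t * |l t| := mul_le_mul_of_nonneg_left (le_abs_self _) (hq.1 t)
    _ ≤ 1 * |l t| := mul_le_mul_of_nonneg_right (QSet.le_one hq t) (abs_nonneg _)
    _ = |l t| := one_mul _

lemma sum_mul_le_fRisk {T : ℕ} {φ : ℝ → ℝ} {δ : ℝ} {q : Fin T → ℝ} (l : Fin T → ℝ)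
    (hq : q ∈ QSet T φ δ) : ∑ t, q t * l t ≤ fRisk T φ δ l :=
  le_csSup (bddAbove_QSet_image T φ δ l) ⟨q, hq, rfl⟩

lemma fRisk_nonneg (T : ℕ) (φ : ℝ → ℝ) (δ : ℝ) {l : Fin T → ℝ} (hl : ∀ t, 0 ≤ l t) :
    0 ≤ fRisk T φ δ l := by
  refine Real.sSup_nonneg fun _ ⟨q, hq, hx⟩ => hx ▸ ?_
  exact sum_nonneg fun t _ => mul_nonneg (hq.1 t) (hl t)

theorem stmt_8_general (T : ℕ) (φ : ℝ → ℝ)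
    (hφconv : ConvexOn ℝ (Set.Ici (0 : ℝ)) φ) (hφ1 : φ 1 = 0)
    (δ₁ δ₂ : ℝ) (hδ₁ : 0 < δ₁) (hδ : δ₁ ≤ δ₂)
    (l : Fin T → ℝ) (hl : ∀ t, 0 ≤ l t) :
    fRisk T φ δ₂ l ≤ (δ₂ / δ₁) * fRisk T φ δ₁ l := by
  have hδ₂ : 0 < δ₂ := hδ₁.trans_le hδ
  refine Real.sSup_le ?_ (by have := fRisk_nonneg T φ δ₁ hl; positivity)
  rintro _ ⟨q, hq, rfl⟩
  set a := δ₁ / δ₂ with ha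
  have ha₀ : 0 < a := div_pos hδ₁ hδ₂
  have ha₁ : a ≤ 1 := div_le_one_of_le₀ hδ hδ₂.le
  have hmix : (fun t => a * q t + (1 - a) / T) ∈ QSet T φ δ₁ := by
    simpa only [ha, div_mul_cancel₀ δ₁ hδ₂.ne'] using
      mix_uniform_mem_QSet hφconv hφ1 hq ha₀.le ha₁
  have hscaled : a * ∑ t, q t * l t ≤ fRisk T φ δ₁ l :=
    (mul_sum_le_sum_mix_uniform ha₁ hl).trans (sum_mul_le_fRisk l hmix)
  calc ∑ t, q t * l t = a⁻¹ * (a * ∑ t, q t * l t) := (inv_mul_cancel_left₀ ha₀.ne' _).symm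
    _ ≤ a⁻¹ * fRisk T φ δ₁ l := by gcongr
    _ = δ₂ / δ₁ * fRisk T φ δ₁ l := by rw [ha, inv_div]

theorem stmt_8 (T : ℕ) (hT : 1 ≤ T) (φ : ℝ → ℝ)
    (hφconv : ConvexOn ℝ (Set.Ici (0 : ℝ)) φ) (hφ1 : φ 1 = 0)
    (δ₁ δ₂ : ℝ) (hδ₁ : 0 < δ₁) (hδ : δ₁ ≤ δ₂)
    (l : Fin T → ℝ) (hl : ∀ t, 0 ≤ l t) :
    fRisk T φ δ₂ l ≤ (δ₂ / δ₁) * fRisk T φ δ₁ l :=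
  stmt_8_general T φ hφconv hφ1 δ₁ δ₂ hδ₁ hδ l hl
end

section
/- Let T ≥ 1, let φ : ℝ → ℝ be convex on [0,∞) with φ(1) = 0, let δ ≥ 0, and let α ∈ [0,1) be such that α·φ(0) + (1−α)·φ(1/(1−α)) ≤ δ. Define the empirical CVaR at level α of a loss vector l ∈ ℝ^T as CVaR_α(l) = sup { ∑_t q_t l_t : q a probability vector on {1,…,T} with T·q_t ≤ 1/(1−α) for all t }. Then every probability vector q with T·q_t ≤ 1/(1−α) for all t belongs to Q_{φ,δ}, and consequently CVaR_α(l) ≤ ρ_{φ,δ}(l) for every l ∈ ℝ^T. -/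
theorem stmt_9 (T : ℕ) (hT : 1 ≤ T) (φ : ℝ → ℝ)
    (hφconv : ConvexOn ℝ (Set.Ici (0 : ℝ)) φ) (hφ1 : φ 1 = 0)
    (δ : ℝ) (hδ : 0 ≤ δ) (α : ℝ) (hα0 : 0 ≤ α) (hα1 : α < 1)
    (hcond : α * φ 0 + (1 - α) * φ (1 / (1 - α)) ≤ δ) :
    (∀ q : Fin T → ℝ,
      ((∀ t, 0 ≤ q t) ∧ (∑ t, q t = 1) ∧ (∀ t, (T : ℝ) * q t ≤ 1 / (1 - α))) →
      q ∈ QSet T φ δ) ∧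
    (∀ l : Fin T → ℝ,
      sSup ((fun q : Fin T → ℝ => ∑ t, q t * l t) ''
        {q : Fin T → ℝ | (∀ t, 0 ≤ q t) ∧ (∑ t, q t = 1) ∧
          (∀ t, (T : ℝ) * q t ≤ 1 / (1 - α))}) ≤ fRisk T φ δ l) := by
  have h1α : 0 < 1 - α := by linarith
  have hT0 : (0:ℝ) < T := by exact_mod_cast hT
  set c : ℝ := 1 / (1 - α) with hc
  have hc0 : 0 ≤ c := by positivity
  have hc1 : (1:ℝ) ≤ c := by
    rw [hc, le_div_iff₀ h1α, one_mul]; linarith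
  have hmem : ∀ q : Fin T → ℝ,
      ((∀ t, 0 ≤ q t) ∧ (∑ t, q t = 1) ∧ (∀ t, (T : ℝ) * q t ≤ c)) →
      q ∈ QSet T φ δ := by
    rintro q ⟨hq0, hq1, hqb⟩
    refine ⟨hq0, hq1, ?_⟩
    have hsum : ∑ t, (T:ℝ) * q t = T := by
      rw [← Finset.mul_sum, hq1, mul_one]
    have key : ∀ t, φ ((T:ℝ) * q t) ≤
        (1 - (T:ℝ) * q t * (1-α)) * φ 0 + ((T:ℝ) * q t * (1-α)) * φ c := by
      intro t
      have hx0 : 0 ≤ (T:ℝ) * q t := mul_nonneg hT0.le (hq0 t)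
      have hxc : (T:ℝ) * q t ≤ c := hqb t
      have hb : 0 ≤ (T:ℝ) * q t * (1-α) := mul_nonneg hx0 h1α.le
      have hb1 : (T:ℝ) * q t * (1-α) ≤ 1 := by
        have := mul_le_mul_of_nonneg_right hxc h1α.le
        rwa [hc, one_div, inv_mul_cancel₀ (ne_of_gt h1α)] at this
      have ha : 0 ≤ 1 - (T:ℝ) * q t * (1-α) := by linarith
      have hconv := hφconv.2 (Set.mem_Ici.mpr le_rfl) (Set.mem_Ici.mpr hc0)
        ha hb (by ring)
      have harg : (1 - (T:ℝ)*q t*(1-α)) • (0:ℝ) + ((T:ℝ)*q t*(1-α)) • c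
          = (T:ℝ) * q t := by
        simp only [smul_eq_mul, mul_zero, zero_add, hc]
        field_simp
      rw [harg] at hconv
      simpa [smul_eq_mul] using hconv
    have hA : ∑ t : Fin T, (1 - (T:ℝ)*q t*(1-α)) = α * T := by
      rw [Finset.sum_sub_distrib]
      simp only [Finset.sum_const, Finset.card_univ, Fintype.card_fin,
        nsmul_eq_mul, mul_one]
      rw [← Finset.sum_mul, hsum]; ring
    have hB : ∑ t : Fin T, (T:ℝ)*q t*(1-α) = (1-α) * T := by
      rw [← Finset.sum_mul, hsum]; ring
    calc (1/(T:ℝ)) * ∑ t, φ ((T:ℝ)*q t)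
        ≤ (1/(T:ℝ)) * ∑ t, ((1 - (T:ℝ)*q t*(1-α)) * φ 0 + ((T:ℝ)*q t*(1-α)) * φ c) :=
          mul_le_mul_of_nonneg_left (Finset.sum_le_sum fun t _ => key t) (by positivity)
      _ = α * φ 0 + (1-α) * φ c := by
          rw [Finset.sum_add_distrib, ← Finset.sum_mul, ← Finset.sum_mul, hA, hB]
          field_simp
      _ ≤ δ := hcond
  refine ⟨hmem, ?_⟩
  intro l
  apply csSup_le_csSup
  · refine ⟨∑ t, |l t|, ?_⟩
    rintro x ⟨q, ⟨hq0, hq1, -⟩, rfl⟩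
    have hqle1 : ∀ t, q t ≤ 1 := fun t =>
      hq1 ▸ Finset.single_le_sum (fun i _ => hq0 i) (Finset.mem_univ t)
    refine Finset.sum_le_sum fun t _ => ?_
    calc q t * l t ≤ q t * |l t| :=
          mul_le_mul_of_nonneg_left (le_abs_self _) (hq0 t)
      _ ≤ 1 * |l t| := mul_le_mul_of_nonneg_right (hqle1 t) (abs_nonneg _)
      _ = |l t| := one_mul _
  · refine ⟨∑ t, (fun _ : Fin T => 1/(T:ℝ)) t * l t, (fun _ => 1/(T:ℝ)), ⟨?_, ?_, ?_⟩, rfl⟩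
    · intro t; positivity
    · simp only [Finset.sum_const, Finset.card_univ, Fintype.card_fin, nsmul_eq_mul]
      field_simp
    · intro t
      rw [mul_one_div, div_self (ne_of_gt hT0)]
      exact hc1
  · rintro x ⟨q, hq, rfl⟩
    exact ⟨q, hmem q hq, rfl⟩
end

section
/- Let T ≥ 1, δ ≥ 0, and let ψ : ℝ → ℝ be convex. Define the primal f-divergence induced risk of x ∈ ℝ^T by ρ_p(x) = inf { t·(δ + μ + (1/T) ∑_t' ψ(x_{t'}/t − μ)) : t > 0, μ ∈ ℝ }. Then ρ_p is subadditive: for all x, y ∈ ℝ^T, ρ_p(x + y) ≤ ρ_p(x) + ρ_p(y). -/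
/-! The risk is the infimum of a jointly convex, positively homogeneous function of `(x, t, tμ)`,
so its values at `x` and `y` combine into a value at `x + y` by adding the parameters `t` and
`tμ`. Since `sInf` of a set of reals that is unbounded below is `0`, one also needs that
boundedness below of the feasible values does not depend on `x`, which follows from the same
combination step. -/

/-- The primal f-divergence induced risk
`ρ_p(x) = inf_{t > 0, μ ∈ ℝ} t·(δ + μ + (1/T) ∑_{t'} ψ(x_{t'}/t − μ))`
under the empirical (uniform) distribution. -/
noncomputable def rhoPrimal (T : ℕ) (δ : ℝ) (ψ : ℝ → ℝ) (x : Fin T → ℝ) : ℝ :=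
  sInf {v : ℝ | ∃ t : ℝ, 0 < t ∧ ∃ μ : ℝ,
    v = t * (δ + μ + (1 / (T : ℝ)) * ∑ t', ψ (x t' / t - μ))}

theorem ConvexOn.perspective_add_le {s : Set ℝ} {ψ : ℝ → ℝ} (hψ : ConvexOn ℝ s ψ)
    {t₁ t₂ u₁ u₂ : ℝ} (ht₁ : 0 < t₁) (ht₂ : 0 < t₂) (hu₁ : u₁ ∈ s) (hu₂ : u₂ ∈ s) :
    (t₁ + t₂) * ψ ((t₁ * u₁ + t₂ * u₂) / (t₁ + t₂)) ≤ t₁ * ψ u₁ + t₂ * ψ u₂ := by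
  have ht : 0 < t₁ + t₂ := add_pos ht₁ ht₂
  have hconv := hψ.2 hu₁ hu₂ (div_pos ht₁ ht).le (div_pos ht₂ ht).le
    (by rw [← add_div, div_self ht.ne'])
  simp only [smul_eq_mul] at hconv
  rw [div_mul_eq_mul_div, div_mul_eq_mul_div, ← add_div] at hconv
  calc (t₁ + t₂) * ψ ((t₁ * u₁ + t₂ * u₂) / (t₁ + t₂))
      ≤ (t₁ + t₂) * (t₁ / (t₁ + t₂) * ψ u₁ + t₂ / (t₁ + t₂) * ψ u₂) :=
        mul_le_mul_of_nonneg_left hconv ht.le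
    _ = t₁ * ψ u₁ + t₂ * ψ u₂ := by field_simp

open scoped Pointwise

section RiskSet

variable {T : ℕ} {δ : ℝ} {ψ : ℝ → ℝ}

variable (T δ ψ) in
noncomputable def riskObjective (x : Fin T → ℝ) (t μ : ℝ) : ℝ :=
  t * (δ + μ + (1 / (T : ℝ)) * ∑ i, ψ (x i / t - μ))

variable (T δ ψ) in
def riskSet (x : Fin T → ℝ) : Set ℝ :=
  {v | ∃ t : ℝ, 0 < t ∧ ∃ μ : ℝ, v = riskObjective T δ ψ x t μ}

theorem rhoPrimal_eq_sInf_riskSet (x : Fin T → ℝ) :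
    rhoPrimal T δ ψ x = sInf (riskSet T δ ψ x) := rfl

theorem riskSet_nonempty (x : Fin T → ℝ) : (riskSet T δ ψ x).Nonempty :=
  ⟨_, 1, one_pos, 0, rfl⟩

theorem riskObjective_add_le (hψ : ConvexOn ℝ Set.univ ψ) (x y : Fin T → ℝ)
    {t₁ t₂ : ℝ} (ht₁ : 0 < t₁) (ht₂ : 0 < t₂) (μ₁ μ₂ : ℝ) :
    riskObjective T δ ψ (x + y) (t₁ + t₂) ((t₁ * μ₁ + t₂ * μ₂) / (t₁ + t₂)) ≤
      riskObjective T δ ψ x t₁ μ₁ + riskObjective T δ ψ y t₂ μ₂ := by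
  have ht : t₁ + t₂ ≠ 0 := (add_pos ht₁ ht₂).ne'
  have hψ_le : ∀ i, (t₁ + t₂) * ψ ((x + y) i / (t₁ + t₂) - (t₁ * μ₁ + t₂ * μ₂) / (t₁ + t₂)) ≤
      t₁ * ψ (x i / t₁ - μ₁) + t₂ * ψ (y i / t₂ - μ₂) := fun i => by
    have hu : (x + y) i / (t₁ + t₂) - (t₁ * μ₁ + t₂ * μ₂) / (t₁ + t₂) =
        (t₁ * (x i / t₁ - μ₁) + t₂ * (y i / t₂ - μ₂)) / (t₁ + t₂) := by
      field_simp
      simp only [Pi.add_apply]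
      ring
    rw [hu]
    exact hψ.perspective_add_le ht₁ ht₂ (Set.mem_univ _) (Set.mem_univ _)
  have hsum := Finset.sum_le_sum fun i (_ : i ∈ Finset.univ) => hψ_le i
  rw [← Finset.mul_sum, Finset.sum_add_distrib, ← Finset.mul_sum, ← Finset.mul_sum] at hsum
  have hT : (0 : ℝ) ≤ 1 / T := by positivity
  unfold riskObjective
  have hμ : (t₁ + t₂) * ((t₁ * μ₁ + t₂ * μ₂) / (t₁ + t₂)) = t₁ * μ₁ + t₂ * μ₂ :=
    mul_div_cancel₀ _ ht
  linear_combination hμ + mul_le_mul_of_nonneg_left hsum hT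

theorem exists_mem_riskSet_add_le (hψ : ConvexOn ℝ Set.univ ψ) (x y : Fin T → ℝ) :
    ∀ v ∈ riskSet T δ ψ x + riskSet T δ ψ y, ∃ w ∈ riskSet T δ ψ (x + y), w ≤ v := by
  rintro _ ⟨_, ⟨t₁, ht₁, μ₁, rfl⟩, _, ⟨t₂, ht₂, μ₂, rfl⟩, rfl⟩
  exact ⟨_, ⟨t₁ + t₂, add_pos ht₁ ht₂, _, rfl⟩, riskObjective_add_le hψ x y ht₁ ht₂ μ₁ μ₂⟩

theorem bddBelow_riskSet_of_add (hψ : ConvexOn ℝ Set.univ ψ) {x y : Fin T → ℝ}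
    (h : BddBelow (riskSet T δ ψ (x + y))) : BddBelow (riskSet T δ ψ x) := by
  obtain ⟨c, hc⟩ := h
  obtain ⟨w, hw⟩ := riskSet_nonempty (δ := δ) (ψ := ψ) y
  refine ⟨c - w, fun v hv => ?_⟩
  obtain ⟨u, hu, huv⟩ := exists_mem_riskSet_add_le hψ x y _ (Set.add_mem_add hv hw)
  linarith [hc hu]

theorem bddBelow_riskSet_iff (hψ : ConvexOn ℝ Set.univ ψ) (x y : Fin T → ℝ) :
    BddBelow (riskSet T δ ψ x) ↔ BddBelow (riskSet T δ ψ y) := by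
  constructor <;> intro h
  · exact bddBelow_riskSet_of_add (y := x - y) hψ (by rwa [add_sub_cancel])
  · exact bddBelow_riskSet_of_add (y := y - x) hψ (by rwa [add_sub_cancel])

end RiskSet

theorem stmt_13_general (T : ℕ) (δ : ℝ)
    (ψ : ℝ → ℝ) (hψ : ConvexOn ℝ Set.univ ψ) :
    ∀ x y : Fin T → ℝ,
      rhoPrimal T δ ψ (x + y) ≤ rhoPrimal T δ ψ x + rhoPrimal T δ ψ y := by
  intro x y
  simp only [rhoPrimal_eq_sInf_riskSet]
  by_cases hx : BddBelow (riskSet T δ ψ x)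
  · have hy := (bddBelow_riskSet_iff hψ x y).1 hx
    have hxy := (bddBelow_riskSet_iff hψ x (x + y)).1 hx
    rw [← csInf_add (riskSet_nonempty x) hx (riskSet_nonempty y) hy]
    refine le_csInf ((riskSet_nonempty x).add (riskSet_nonempty y)) fun v hv => ?_
    obtain ⟨w, hw, hwv⟩ := exists_mem_riskSet_add_le hψ x y v hv
    exact (csInf_le hxy hw).trans hwv
  · have hy := mt (bddBelow_riskSet_iff hψ x y).2 hx
    have hxy := mt (bddBelow_riskSet_iff hψ x (x + y)).2 hx
    rw [Real.sInf_of_not_bddBelow hx, Real.sInf_of_not_bddBelow hy,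
      Real.sInf_of_not_bddBelow hxy, add_zero]

theorem stmt_13 (T : ℕ) (hT : 1 ≤ T) (δ : ℝ) (hδ : 0 ≤ δ)
    (ψ : ℝ → ℝ) (hψ : ConvexOn ℝ Set.univ ψ) :
    ∀ x y : Fin T → ℝ,
      rhoPrimal T δ ψ (x + y) ≤ rhoPrimal T δ ψ x + rhoPrimal T δ ψ y :=
  stmt_13_general T δ ψ hψ
end
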